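/- arXiv:1910.12653 — 2 statements merged into one kernel-verified Lean document; each statement's English description precedes it below -/
import Mathlib

section
/- For any Hermitian n×n matrices A and X with eigenvalue vectors a = (a₁ ≥ … ≥ aₙ) and x = (x₁ ≥ … ≥ xₙ), the inequality ‖[a] − [x]‖_F ≤ ‖A − X‖_F holds, where [a], [x] are the corresponding diagonal matrices. -/
open Matrix
open scoped ComplexOrder

/-- Squared Frobenius norm of a complex matrix. -/
noncomputable def frobSq {n : ℕ} (A : Matrix (Fin n) (Fin n) ℂ) : ℝ :=
  ((Aᴴ * A).trace).re

/-!
Write `A = Uᴴ[a]U`, `X = Vᴴ[x]V` and `W = UVᴴ`. By unitary invariance of the Frobenius norm,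
`‖A - X‖² = ‖[a] - W[x]Wᴴ‖² = ‖a‖² + ‖x‖² - 2 Re tr([a] W [x] Wᴴ)`, while
`‖[a] - [x]‖² = ‖a‖² + ‖x‖² - 2 ∑ aᵢxᵢ`. Now `Re tr([a] W [x] Wᴴ) = ∑ aᵢ |Wᵢⱼ|² xⱼ`, and the matrix
`(|Wᵢⱼ|²)` is doubly stochastic, hence by Birkhoff's theorem a convex combination of permutation
matrices; for each permutation the rearrangement inequality bounds the pairing by `∑ aᵢxᵢ`, since
`a` and `x` are sorted the same way.
-/

theorem Monovary.dotProduct_mulVec_le_of_mem_doublyStochastic {R n : Type*} [Fintype n]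
    [DecidableEq n] [Field R] [LinearOrder R] [IsStrictOrderedRing R] {f g : n → R}
    (hfg : Monovary f g) {M : Matrix n n R} (hM : M ∈ doublyStochastic R n) :
    f ⬝ᵥ (M *ᵥ g) ≤ f ⬝ᵥ g := by
  obtain ⟨w, hw0, hw1, rfl⟩ := exists_eq_sum_perm_of_mem_doublyStochastic hM
  calc f ⬝ᵥ ((∑ σ, w σ • σ.permMatrix R) *ᵥ g) = ∑ σ, w σ * ∑ i, f i * g (σ i) := by
        simp only [sum_mulVec, dotProduct_sum, smul_mulVec, dotProduct_smul, permMatrix_mulVec]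
        rfl
    _ ≤ ∑ σ, w σ * ∑ i, f i * g i :=
        Finset.sum_le_sum fun σ _ =>
          mul_le_mul_of_nonneg_left hfg.sum_mul_comp_perm_le_sum_mul (hw0 σ)
    _ = f ⬝ᵥ g := by rw [← Finset.sum_mul, hw1, one_mul, dotProduct]

theorem Matrix.norm_sq_entries_mem_doublyStochastic {𝕜 n : Type*} [RCLike 𝕜] [Fintype n]
    [DecidableEq n] {W : Matrix n n 𝕜} (hW : W ∈ unitaryGroup n 𝕜) :
    of (fun i j => ‖W i j‖ ^ 2) ∈ doublyStochastic ℝ n := by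
  refine mem_doublyStochastic_iff_sum.2 ⟨fun i j => sq_nonneg _, fun i => ?_, fun j => ?_⟩
  · have h := congr_fun₂ (mem_unitaryGroup_iff.1 hW) i i
    simp only [mul_apply, star_apply, RCLike.star_def, RCLike.mul_conj, one_apply_eq] at h
    exact_mod_cast h
  · have h := congr_fun₂ (mem_unitaryGroup_iff'.1 hW) j j
    simp only [mul_apply, star_apply, RCLike.star_def, mul_comm (starRingEnd 𝕜 _),
      RCLike.mul_conj, one_apply_eq] at h
    exact_mod_cast h

theorem Matrix.re_trace_diagonal_mul_unitary_conj_le {𝕜 n : Type*} [RCLike 𝕜] [Fintype n]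
    [DecidableEq n] {W : Matrix n n 𝕜} (hW : W ∈ unitaryGroup n 𝕜) {a x : n → ℝ}
    (hax : Monovary a x) :
    RCLike.re (diagonal (fun i => (a i : 𝕜)) * (W * diagonal (fun i => (x i : 𝕜)) * Wᴴ)).trace
      ≤ RCLike.re (diagonal (fun i => (a i : 𝕜)) * diagonal (fun i => (x i : 𝕜))).trace := by
  have lhs : RCLike.re (diagonal (fun i => (a i : 𝕜)) *
      (W * diagonal (fun i => (x i : 𝕜)) * Wᴴ)).trace =
      a ⬝ᵥ (of (fun i j => ‖W i j‖ ^ 2) *ᵥ x) := by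
    have h : (diagonal (fun i => (a i : 𝕜)) * (W * diagonal (fun i => (x i : 𝕜)) * Wᴴ)).trace
        = ((a ⬝ᵥ (of (fun i j => ‖W i j‖ ^ 2) *ᵥ x) : ℝ) : 𝕜) := by
      simp only [trace, diag_apply, diagonal_mul]
      simp only [mul_apply (M := W * _), mul_diagonal, conjTranspose_apply, RCLike.star_def,
        dotProduct, mulVec, of_apply, Finset.mul_sum]
      push_cast
      refine Finset.sum_congr rfl fun i _ => Finset.sum_congr rfl fun j _ => ?_
      rw [← RCLike.mul_conj]
      ring
    rw [h, RCLike.ofReal_re]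
  have rhs : RCLike.re (diagonal (fun i => (a i : 𝕜)) * diagonal (fun i => (x i : 𝕜))).trace
      = a ⬝ᵥ x := by
    simp [diagonal_mul_diagonal, trace_diagonal, dotProduct]
  rw [lhs, rhs]
  exact hax.dotProduct_mulVec_le_of_mem_doublyStochastic (norm_sq_entries_mem_doublyStochastic hW)

theorem frobSq_sub {n : ℕ} (P Q : Matrix (Fin n) (Fin n) ℂ) :
    frobSq (P - Q) = frobSq P + frobSq Q - 2 * (Pᴴ * Q).trace.re := by
  have h : (Qᴴ * P).trace = star (Pᴴ * Q).trace := by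
    rw [← trace_conjTranspose, conjTranspose_mul, conjTranspose_conjTranspose]
  simp only [frobSq, conjTranspose_sub, sub_mul, mul_sub, trace_sub, Complex.sub_re, h,
    Complex.star_def, Complex.conj_re]
  ring

theorem frobSq_unitary_conj {n : ℕ} {U : Matrix (Fin n) (Fin n) ℂ}
    (hU : U ∈ unitaryGroup (Fin n) ℂ) (M : Matrix (Fin n) (Fin n) ℂ) :
    frobSq (U * M * Uᴴ) = frobSq M := by
  have h : Uᴴ * U = 1 := mem_unitaryGroup_iff'.1 hU
  have hMM : (U * M * Uᴴ)ᴴ * (U * M * Uᴴ) = U * (Mᴴ * M) * Uᴴ := by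
    simp only [conjTranspose_mul, conjTranspose_conjTranspose, mul_assoc]
    rw [← mul_assoc Uᴴ U, h, one_mul]
  rw [frobSq, frobSq, hMM, trace_mul_cycle, h, one_mul]

/-- Mirsky/Hoffman–Wielandt-type inequality for Hermitian matrices:
if `A = Uᴴ[a]U` and `X = Vᴴ[x]V` with decreasing eigenvalue vectors `a`, `x`, then
`‖[a] − [x]‖_F ≤ ‖A − X‖_F`. -/
theorem diag_eigenvalue_frobenius_le {n : ℕ}
    (U V : Matrix (Fin n) (Fin n) ℂ)
    (hU : U ∈ Matrix.unitaryGroup (Fin n) ℂ) (hV : V ∈ Matrix.unitaryGroup (Fin n) ℂ)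
    (a x : Fin n → ℝ) (ha : Antitone a) (hx : Antitone x)
    (A X : Matrix (Fin n) (Fin n) ℂ)
    (hA : A = Uᴴ * Matrix.diagonal (fun i => (a i : ℂ)) * U)
    (hX : X = Vᴴ * Matrix.diagonal (fun i => (x i : ℂ)) * V) :
    frobSq (Matrix.diagonal (fun i => (a i : ℂ)) - Matrix.diagonal (fun i => (x i : ℂ)))
      ≤ frobSq (A - X) := by
  set D := diagonal (fun i => (a i : ℂ))
  set E := diagonal (fun i => (x i : ℂ))
  set W := U * Vᴴ
  have hD : Dᴴ = D := (isHermitian_diagonal_of_self_adjoint _ (by ext; simp)).eq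
  have hW : W ∈ unitaryGroup (Fin n) ℂ := mul_mem hU (Unitary.star_mem hV)
  have hU' : Uᴴ ∈ unitaryGroup (Fin n) ℂ := Unitary.star_mem hU
  have hUU : Uᴴ * U = 1 := mem_unitaryGroup_iff'.1 hU
  have hAX : A - X = Uᴴ * (D - W * E * Wᴴ) * Uᴴᴴ := by
    simp only [hA, hX, W, conjTranspose_mul, conjTranspose_conjTranspose, mul_sub, sub_mul,
      mul_assoc]
    simp only [← mul_assoc Uᴴ U, hUU, one_mul, mul_one]
  have key : (D * (W * E * Wᴴ)).trace.re ≤ (D * E).trace.re :=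
    re_trace_diagonal_mul_unitary_conj_le hW (ha.monovary hx)
  calc frobSq (D - E) = frobSq D + frobSq E - 2 * (D * E).trace.re := by rw [frobSq_sub, hD]
    _ ≤ frobSq D + frobSq E - 2 * (D * (W * E * Wᴴ)).trace.re := by linarith
    _ = frobSq (A - X) := by
        rw [hAX, frobSq_unitary_conj hU', frobSq_sub, hD, frobSq_unitary_conj hW]
end

section
/- Let c ∈ ℝ and let Y be a nonempty closed subset of {x ∈ ℝⁿ : x₁ ≥ … ≥ xₙ ≥ c}. Let A = U†[a]U be Hermitian with a₁ ≥ … ≥ aₙ ≥ c and U unitary. Then there exists b ∈ Y such that for every unitary V and every d ∈ Y, ‖A − U†[b]U‖_F ≤ ‖A − V†[d]V‖_F. -/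
open Matrix
open scoped ComplexOrder

/-!
For unitary `U, V` put `W = U Vᴴ`; then `‖Uᴴ[a]U - Vᴴ[d]V‖² = ∑ᵢⱼ (aᵢ - dⱼ)² |Wᵢⱼ|²`, and the
matrix `(|Wᵢⱼ|²)` is doubly stochastic. By Birkhoff's theorem this linear function of it is
minimised at a permutation matrix, and for decreasing `a, d` the rearrangement inequality puts the
minimum at the identity: the distance is at least `∑ᵢ (aᵢ - dᵢ)²` (Hoffman–Wielandt), with
equality for `V = U`. So `b` can be taken to be a point of `Y` closest to `a` in the Euclidean
metric.
-/

open Finset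

section Rearrangement

variable {ι : Type*} [Fintype ι] [LinearOrder ι] {a d : ι → ℝ}

theorem sum_sq_sub_le_sum_sq_sub_comp_perm (ha : Antitone a) (hd : Antitone d)
    (σ : Equiv.Perm ι) : ∑ i, (a i - d i) ^ 2 ≤ ∑ i, (a i - d (σ i)) ^ 2 := by
  have hsq : ∑ i, d (σ i) ^ 2 = ∑ i, d i ^ 2 := Equiv.sum_comp σ (fun i => d i ^ 2)
  have hmul : ∑ i, a i * d (σ i) ≤ ∑ i, a i * d i :=
    (ha.monovary hd).sum_mul_comp_perm_le_sum_mul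
  simp only [sub_sq, sum_add_distrib, sum_sub_distrib, mul_assoc, ← mul_sum, hsq]
  linarith

theorem sum_sq_sub_le_of_mem_doublyStochastic [DecidableEq ι] (ha : Antitone a) (hd : Antitone d)
    {S : Matrix ι ι ℝ} (hS : S ∈ doublyStochastic ℝ ι) :
    ∑ i, (a i - d i) ^ 2 ≤ ∑ i, ∑ j, (a i - d j) ^ 2 * S i j := by
  have hlin : IsLinearMap ℝ fun M : Matrix ι ι ℝ => ∑ i, ∑ j, (a i - d j) ^ 2 * M i j :=
    ⟨fun M N => by simp [mul_add, sum_add_distrib],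
      fun r M => by simp [mul_sum, mul_left_comm]⟩
  have hperm : ∀ σ : Equiv.Perm ι,
      ∑ i, (a i - d i) ^ 2 ≤ ∑ i, ∑ j, (a i - d j) ^ 2 * σ.permMatrix ℝ i j := by
    intro σ
    simpa [PEquiv.toMatrix_apply, eq_comm] using sum_sq_sub_le_sum_sq_sub_comp_perm ha hd σ
  rw [← SetLike.mem_coe, doublyStochastic_eq_convexHull_permMatrix] at hS
  refine convexHull_min ?_ (convex_halfSpace_ge hlin _) hS
  rintro _ ⟨σ, rfl⟩
  exact hperm σ

end Rearrangement

section Frobenius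

variable {m : ℕ}

theorem frobSq_eq_sum_normSq (M : Matrix (Fin m) (Fin m) ℂ) :
    frobSq M = ∑ i, ∑ j, Complex.normSq (M i j) := by
  rw [frobSq, trace, Complex.re_sum, sum_comm]
  simp [mul_apply, ← Complex.normSq_eq_conj_mul_self]

theorem frobSq_unitary_mul {W : Matrix (Fin m) (Fin m) ℂ} (hW : W ∈ unitaryGroup (Fin m) ℂ)
    (M : Matrix (Fin m) (Fin m) ℂ) : frobSq (W * M) = frobSq M := by
  have hWW : Wᴴ * W = 1 := Unitary.star_mul_self_of_mem hW
  rw [frobSq, conjTranspose_mul, Matrix.mul_assoc, ← Matrix.mul_assoc Wᴴ, hWW, Matrix.one_mul,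
    frobSq]

theorem frobSq_mul_unitary {W : Matrix (Fin m) (Fin m) ℂ} (hW : W ∈ unitaryGroup (Fin m) ℂ)
    (M : Matrix (Fin m) (Fin m) ℂ) : frobSq (M * W) = frobSq M := by
  have hWW : W * Wᴴ = 1 := Unitary.mul_star_self_of_mem hW
  have hcycle : (M * W)ᴴ * (M * W) = Wᴴ * (Mᴴ * M * W) := by
    simp only [conjTranspose_mul, Matrix.mul_assoc]
  rw [frobSq, hcycle, trace_mul_comm, Matrix.mul_assoc, hWW, Matrix.mul_one, frobSq]

theorem normSq_mem_doublyStochastic {W : Matrix (Fin m) (Fin m) ℂ}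
    (hW : W ∈ unitaryGroup (Fin m) ℂ) :
    Matrix.of (fun i j => Complex.normSq (W i j)) ∈ doublyStochastic ℝ (Fin m) := by
  have hWW : Wᴴ * W = 1 := Unitary.star_mul_self_of_mem hW
  have hWW' : W * Wᴴ = 1 := Unitary.mul_star_self_of_mem hW
  refine mem_doublyStochastic_iff_sum.2
    ⟨fun i j => Complex.normSq_nonneg _, fun i => ?_, fun j => ?_⟩
  · have h := congr_fun₂ hWW' i i
    simp only [mul_apply, conjTranspose_apply, one_apply_eq, Complex.star_def,
      Complex.mul_conj] at h
    exact_mod_cast h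
  · have h := congr_fun₂ hWW j j
    simp only [mul_apply, conjTranspose_apply, one_apply_eq, Complex.star_def,
      ← Complex.normSq_eq_conj_mul_self] at h
    exact_mod_cast h

theorem frobSq_conj_diagonal_sub_conj_diagonal (a d : Fin m → ℝ)
    {U V : Matrix (Fin m) (Fin m) ℂ} (hU : U ∈ unitaryGroup (Fin m) ℂ)
    (hV : V ∈ unitaryGroup (Fin m) ℂ) :
    frobSq (Uᴴ * diagonal (fun i => (a i : ℂ)) * U - Vᴴ * diagonal (fun i => (d i : ℂ)) * V)
      = ∑ i, ∑ j, (a i - d j) ^ 2 * Complex.normSq ((U * Vᴴ) i j) := by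
  have hUU : Uᴴ * U = 1 := Unitary.star_mul_self_of_mem hU
  have hVV : Vᴴ * V = 1 := Unitary.star_mul_self_of_mem hV
  set W := U * Vᴴ
  have hfactor : Uᴴ * diagonal (fun i => (a i : ℂ)) * U - Vᴴ * diagonal (fun i => (d i : ℂ)) * V
      = Uᴴ * (diagonal (fun i => (a i : ℂ)) * W - W * diagonal (fun i => (d i : ℂ))) * V := by
    simp only [W, Matrix.mul_sub, Matrix.sub_mul, Matrix.mul_assoc, hVV, Matrix.mul_one]
    simp only [← Matrix.mul_assoc, hUU, Matrix.one_mul]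
  rw [hfactor, frobSq_mul_unitary hV, frobSq_unitary_mul (W := Uᴴ) (Unitary.star_mem hU),
    frobSq_eq_sum_normSq]
  refine sum_congr rfl fun i _ => sum_congr rfl fun j _ => ?_
  rw [Matrix.sub_apply, diagonal_mul, mul_diagonal, mul_comm (W i j), ← sub_mul,
    ← Complex.ofReal_sub, Complex.normSq_mul, Complex.normSq_ofReal, sq]

theorem frobSq_conj_diagonal_sub_conj_diagonal_self (a b : Fin m → ℝ)
    {U : Matrix (Fin m) (Fin m) ℂ} (hU : U ∈ unitaryGroup (Fin m) ℂ) :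
    frobSq (Uᴴ * diagonal (fun i => (a i : ℂ)) * U - Uᴴ * diagonal (fun i => (b i : ℂ)) * U)
      = ∑ i, (a i - b i) ^ 2 := by
  have hUU : U * Uᴴ = 1 := Unitary.mul_star_self_of_mem hU
  simp [frobSq_conj_diagonal_sub_conj_diagonal a b hU hU, hUU, one_apply, apply_ite]

theorem sum_sq_sub_le_frobSq_conj_diagonal_sub_conj_diagonal {a d : Fin m → ℝ}
    (ha : Antitone a) (hd : Antitone d) {U V : Matrix (Fin m) (Fin m) ℂ}
    (hU : U ∈ unitaryGroup (Fin m) ℂ) (hV : V ∈ unitaryGroup (Fin m) ℂ) :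
    ∑ i, (a i - d i) ^ 2 ≤
      frobSq (Uᴴ * diagonal (fun i => (a i : ℂ)) * U - Vᴴ * diagonal (fun i => (d i : ℂ)) * V) := by
  rw [frobSq_conj_diagonal_sub_conj_diagonal a d hU hV]
  exact sum_sq_sub_le_of_mem_doublyStochastic ha hd
    (normSq_mem_doublyStochastic (mul_mem hU (Unitary.star_mem hV)))

end Frobenius

theorem exists_mem_forall_sum_sq_sub_le {ι : Type*} [Fintype ι] {Y : Set (ι → ℝ)}
    (hYne : Y.Nonempty) (hYcl : IsClosed Y) (a : ι → ℝ) :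
    ∃ b ∈ Y, ∀ d ∈ Y, ∑ i, (a i - b i) ^ 2 ≤ ∑ i, (a i - d i) ^ 2 := by
  set E : Set (EuclideanSpace ℝ ι) := WithLp.ofLp ⁻¹' Y
  have hEcl : IsClosed E := hYcl.preimage (PiLp.continuous_ofLp 2 _)
  obtain ⟨y₀, hy₀⟩ := hYne
  obtain ⟨y, hyE, hy⟩ := hEcl.exists_infDist_eq_dist ⟨WithLp.toLp 2 y₀, hy₀⟩ (WithLp.toLp 2 a)
  refine ⟨y.ofLp, hyE, fun d hd => ?_⟩
  have hle : dist (WithLp.toLp 2 a) y ≤ dist (WithLp.toLp 2 a) (WithLp.toLp 2 d) :=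
    hy ▸ Metric.infDist_le_dist_of_mem (show WithLp.toLp 2 d ∈ E from hd)
  have hsq := pow_le_pow_left₀ dist_nonneg hle 2
  simpa [EuclideanSpace.dist_sq_eq, Real.dist_eq, sq_abs] using hsq

theorem nearest_in_unitary_orbit_family_general {n : ℕ} (c : ℝ)
    (Y : Set (Fin (n + 1) → ℝ)) (hYne : Y.Nonempty) (hYcl : IsClosed Y)
    (hYsub : Y ⊆ {x | Antitone x ∧ ∀ i, c ≤ x i})
    (U : Matrix (Fin (n + 1)) (Fin (n + 1)) ℂ)
    (hU : U ∈ Matrix.unitaryGroup (Fin (n + 1)) ℂ)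
    (a : Fin (n + 1) → ℝ) (ha : Antitone a)
    (A : Matrix (Fin (n + 1)) (Fin (n + 1)) ℂ)
    (hA : A = Uᴴ * Matrix.diagonal (fun i => (a i : ℂ)) * U) :
    ∃ b ∈ Y, ∀ V ∈ Matrix.unitaryGroup (Fin (n + 1)) ℂ, ∀ d ∈ Y,
      frobSq (A - Uᴴ * Matrix.diagonal (fun i => (b i : ℂ)) * U)
        ≤ frobSq (A - Vᴴ * Matrix.diagonal (fun i => (d i : ℂ)) * V) := by
  obtain ⟨b, hbY, hb⟩ := exists_mem_forall_sum_sq_sub_le hYne hYcl a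
  refine ⟨b, hbY, fun V hV d hd => ?_⟩
  subst hA
  calc frobSq (Uᴴ * diagonal (fun i => (a i : ℂ)) * U - Uᴴ * diagonal (fun i => (b i : ℂ)) * U)
      = ∑ i, (a i - b i) ^ 2 := frobSq_conj_diagonal_sub_conj_diagonal_self a b hU
    _ ≤ ∑ i, (a i - d i) ^ 2 := hb d hd
    _ ≤ _ := sum_sq_sub_le_frobSq_conj_diagonal_sub_conj_diagonal ha (hYsub hd).1 hU hV

/-- for a closed nonempty family `Y` of decreasing eigenvalue vectors bounded
below by `c`, the Frobenius-nearest matrix in `S_Y = {Vᴴ[d]V}` to `A = Uᴴ[a]U` can be chosen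
with the same eigenvectors `U` as `A`. -/
theorem nearest_in_unitary_orbit_family {n : ℕ} (c : ℝ)
    (Y : Set (Fin (n + 1) → ℝ)) (hYne : Y.Nonempty) (hYcl : IsClosed Y)
    (hYsub : Y ⊆ {x | Antitone x ∧ ∀ i, c ≤ x i})
    (U : Matrix (Fin (n + 1)) (Fin (n + 1)) ℂ)
    (hU : U ∈ Matrix.unitaryGroup (Fin (n + 1)) ℂ)
    (a : Fin (n + 1) → ℝ) (ha : Antitone a) (hac : ∀ i, c ≤ a i)
    (A : Matrix (Fin (n + 1)) (Fin (n + 1)) ℂ)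
    (hA : A = Uᴴ * Matrix.diagonal (fun i => (a i : ℂ)) * U) :
    ∃ b ∈ Y, ∀ V ∈ Matrix.unitaryGroup (Fin (n + 1)) ℂ, ∀ d ∈ Y,
      frobSq (A - Uᴴ * Matrix.diagonal (fun i => (b i : ℂ)) * U)
        ≤ frobSq (A - Vᴴ * Matrix.diagonal (fun i => (d i : ℂ)) * V) :=
  nearest_in_unitary_orbit_family_general c Y hYne hYcl hYsub U hU a ha A hA
end
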